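/- Let X be a compact Hausdorff space, C ⊆ X closed, μ a Borel probability measure on X, {C_i}_{i ∈ I} a net of open neighborhoods of C shrinking nicely to C with μ(C_i) > 0 for all i, and L a positive linear functional on bounded nets extending the limit. Then the map f ↦ L((1/μ(C_i)) ∫_{C_i} f̃ dμ), where f̃ is any continuous extension of f : C → ℝ, is a well-defined positive linear functional on C(C, ℝ) of norm 1 sending the constant function 1 to 1; hence by the Riesz–Markov theorem it is given by integration against a Borel probability measure on C. -/

import Mathlib

open MeasureTheory
open Set TopologicalSpace ENNReal

set_option linter.unusedSectionVars false
set_option linter.unusedVariables false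
open MeasureTheory Set TopologicalSpace ENNReal

section RieszAux

variable {K : Type*} [TopologicalSpace K] [CompactSpace K] [T2Space K]

/-- Test functions for the Riesz content. -/
def RieszTest (S : Set K) : Set C(K, ℝ) :=
  {f | (∀ x, 0 ≤ f x) ∧ ∀ x ∈ S, 1 ≤ f x}

lemma rieszTest_one_mem (S : Set K) : (1 : C(K, ℝ)) ∈ RieszTest S :=
  ⟨fun _ => zero_le_one, fun _ _ => le_refl 1⟩

/-- The Riesz content of a set. -/
noncomputable def rieszC (Λ : C(K, ℝ) → ℝ) (S : Set K) : ℝ :=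
  sInf (Λ '' RieszTest S)

variable {Λ : C(K, ℝ) → ℝ}
variable (hadd : ∀ f g : C(K, ℝ), Λ (f + g) = Λ f + Λ g)
variable (hpos : ∀ f : C(K, ℝ), (∀ x, 0 ≤ f x) → 0 ≤ Λ f)

section
include hadd hpos

lemma riesz_mono (f g : C(K, ℝ)) (h : ∀ x, f x ≤ g x) : Λ f ≤ Λ g := by
  have h0 : 0 ≤ Λ (g - f) := hpos _ (fun x => by
    simp only [ContinuousMap.sub_apply]; linarith [h x])
  have h1 : Λ (f + (g - f)) = Λ f + Λ (g - f) := hadd _ _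
  have h2 : f + (g - f) = g := by abel
  rw [h2] at h1; linarith

end

include hpos

lemma riesz_bddBelow (S : Set K) : BddBelow (Λ '' RieszTest S) :=
  ⟨0, fun y ⟨f, hf, hfy⟩ => hfy ▸ hpos f hf.1⟩

lemma rieszC_le {S : Set K} {f : C(K, ℝ)} (hf : f ∈ RieszTest S) : rieszC Λ S ≤ Λ f :=
  csInf_le (riesz_bddBelow hpos S) ⟨f, hf, rfl⟩

lemma le_rieszC {S : Set K} {c : ℝ} (h : ∀ f ∈ RieszTest S, c ≤ Λ f) : c ≤ rieszC Λ S :=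
  le_csInf ⟨Λ 1, 1, rieszTest_one_mem S, rfl⟩ (fun y ⟨f, hf, hfy⟩ => hfy ▸ h f hf)

lemma rieszC_nonneg (S : Set K) : 0 ≤ rieszC Λ S :=
  le_rieszC hpos (fun f hf => hpos f hf.1)

lemma rieszC_mono {S T : Set K} (h : S ⊆ T) : rieszC Λ S ≤ rieszC Λ T :=
  csInf_le_csInf (riesz_bddBelow hpos S) ⟨Λ 1, 1, rieszTest_one_mem T, rfl⟩
    (image_mono (fun f hf => ⟨hf.1, fun x hx => hf.2 x (h hx)⟩))

include hadd

lemma rieszC_union_le (S T : Set K) : rieszC Λ (S ∪ T) ≤ rieszC Λ S + rieszC Λ T := by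
  refine le_of_forall_pos_le_add (fun ε hε => ?_)
  obtain ⟨a, ⟨f, hf, rfl⟩, hfa⟩ :=
    Real.lt_sInf_add_pos (s := Λ '' RieszTest S) ⟨Λ 1, 1, rieszTest_one_mem S, rfl⟩ (half_pos hε)
  obtain ⟨b, ⟨g, hg, rfl⟩, hgb⟩ :=
    Real.lt_sInf_add_pos (s := Λ '' RieszTest T) ⟨Λ 1, 1, rieszTest_one_mem T, rfl⟩ (half_pos hε)
  have hmem : f + g ∈ RieszTest (S ∪ T) := by
    refine ⟨fun x => ?_, fun x hx => ?_⟩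
    · simp only [ContinuousMap.add_apply]; exact add_nonneg (hf.1 x) (hg.1 x)
    · simp only [ContinuousMap.add_apply]
      rcases hx with hx | hx
      · linarith [hf.2 x hx, hg.1 x]
      · linarith [hg.2 x hx, hf.1 x]
  have := rieszC_le hpos hmem
  rw [hadd] at this
  have h2 : rieszC Λ S = sInf (Λ '' RieszTest S) := rfl
  have h3 : rieszC Λ T = sInf (Λ '' RieszTest T) := rfl
  rw [← h2] at hfa; rw [← h3] at hgb
  linarith

lemma rieszC_union_eq {S T : Set K} (hS : IsClosed S) (hT : IsClosed T) (hd : Disjoint S T) :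
    rieszC Λ (S ∪ T) = rieszC Λ S + rieszC Λ T := by
  refine le_antisymm (rieszC_union_le hadd hpos S T) (le_rieszC hpos (fun f hf => ?_))
  obtain ⟨φ, hφT, hφS, hφ01⟩ := exists_continuous_zero_one_of_isClosed hT hS hd.symm
  have h1 : φ * f ∈ RieszTest S := by
    refine ⟨fun x => mul_nonneg (hφ01 x).1 (hf.1 x), fun x hx => ?_⟩
    have : φ x = 1 := hφS hx
    simp only [ContinuousMap.mul_apply, this, one_mul]
    exact hf.2 x (Or.inl hx)
  have h2 : (1 - φ) * f ∈ RieszTest T := by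
    refine ⟨fun x => ?_, fun x hx => ?_⟩
    · simp only [ContinuousMap.mul_apply, ContinuousMap.sub_apply, ContinuousMap.one_apply]
      exact mul_nonneg (by linarith [(hφ01 x).2]) (hf.1 x)
    · have : φ x = 0 := hφT hx
      simp only [ContinuousMap.mul_apply, ContinuousMap.sub_apply, ContinuousMap.one_apply, this]
      simpa using hf.2 x (Or.inr hx)
  have hsum : φ * f + (1 - φ) * f = f := by ring
  have := hadd (φ * f) ((1 - φ) * f)
  rw [hsum] at this
  have l1 := rieszC_le hpos h1
  have l2 := rieszC_le hpos h2
  linarith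

lemma riesz_le_rieszC {g : C(K, ℝ)} (hg0 : ∀ x, 0 ≤ g x) (hg1 : ∀ x, g x ≤ 1)
    {T : Set K} (hT : ∀ x ∉ T, g x = 0) : Λ g ≤ rieszC Λ T := by
  refine le_rieszC hpos (fun f hf => riesz_mono hadd hpos g f (fun x => ?_))
  by_cases hx : x ∈ T
  · exact (hg1 x).trans (hf.2 x hx)
  · rw [hT x hx]; exact hf.1 x

lemma rieszC_univ (hone : Λ 1 = 1) : rieszC Λ (univ : Set K) = 1 := by
  refine le_antisymm (hone ▸ rieszC_le hpos (rieszTest_one_mem univ))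
    (le_rieszC hpos (fun f hf => ?_))
  have := riesz_mono hadd hpos 1 f (fun x => hf.2 x trivial)
  rwa [hone] at this

/-- The Riesz content as a `Content`. -/
noncomputable def rieszCont : Content K where
  toFun Kc := Real.toNNReal (rieszC Λ Kc)
  mono' K1 K2 h := Real.toNNReal_mono (rieszC_mono hpos h)
  sup_disjoint' K1 K2 hd h1 h2 := by
    have : rieszC Λ ((K1 ⊔ K2 : Compacts K) : Set K) = rieszC Λ K1 + rieszC Λ K2 := by
      rw [Compacts.coe_sup]; exact rieszC_union_eq hadd hpos h1 h2 hd
    rw [this, Real.toNNReal_add (rieszC_nonneg hpos _) (rieszC_nonneg hpos _)]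
  sup_le' K1 K2 := by
    refine le_trans (Real.toNNReal_mono ?_) (Real.toNNReal_add_le)
    rw [Compacts.coe_sup]; exact rieszC_union_le hadd hpos K1 K2

end RieszAux

section RieszRep

variable {K : Type*} [TopologicalSpace K] [CompactSpace K] [T2Space K]
  [MeasurableSpace K] [BorelSpace K]
variable {Λ : C(K, ℝ) → ℝ}
variable (hadd : ∀ f g : C(K, ℝ), Λ (f + g) = Λ f + Λ g)
variable (hpos : ∀ f : C(K, ℝ), (∀ x, 0 ≤ f x) → 0 ≤ Λ f)

include hadd hpos

lemma rieszMeasure_univ (hone : Λ 1 = 1) :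
    (rieszCont hadd hpos).measure univ = 1 := by
  rw [Content.measure_apply _ MeasurableSet.univ,
    Content.outerMeasure_of_isOpen (μ := rieszCont hadd hpos) univ isOpen_univ,
    Content.innerContent_of_isCompact (μ := rieszCont hadd hpos) isCompact_univ isOpen_univ]
  have : (rieszCont hadd hpos).toFun ⟨univ, isCompact_univ⟩ = 1 := by
    simp [rieszCont, rieszC_univ hadd hpos hone]
  change ((rieszCont hadd hpos).toFun ⟨univ, isCompact_univ⟩ : ℝ≥0∞) = 1
  rw [this, ENNReal.coe_one]

lemma rieszMeasure_le_one (hone : Λ 1 = 1) (s : Set K) :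
    (rieszCont hadd hpos).measure s ≤ 1 := by
  rw [← rieszMeasure_univ hadd hpos hone]
  exact measure_mono (subset_univ s)

lemma riesz_le_measure (hone : Λ 1 = 1) {g : C(K, ℝ)} (hg0 : ∀ x, 0 ≤ g x)
    (hg1 : ∀ x, g x ≤ 1) {T U : Set K} (hTc : IsClosed T) (hUo : IsOpen U) (hTU : T ⊆ U)
    (hgT : ∀ x ∉ T, g x = 0) :
    Λ g ≤ ((rieszCont hadd hpos).measure U).toReal := by
  have h1 : Λ g ≤ rieszC Λ T := riesz_le_rieszC hadd hpos hg0 hg1 hgT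
  have h2 : ((rieszCont hadd hpos) ⟨T, hTc.isCompact⟩ : ℝ≥0∞)
      ≤ (rieszCont hadd hpos).measure U := by
    rw [Content.measure_apply _ hUo.measurableSet, Content.outerMeasure_of_isOpen (μ := rieszCont hadd hpos) U hUo]
    exact Content.le_innerContent _ _ ⟨U, hUo⟩ hTU
  have hfin : (rieszCont hadd hpos).measure U ≠ ⊤ :=
    (lt_of_le_of_lt (rieszMeasure_le_one hadd hpos hone U) ENNReal.one_lt_top).ne
  have h3 := ENNReal.toReal_mono hfin h2
  have h4 : (((rieszCont hadd hpos) ⟨T, hTc.isCompact⟩ : ℝ≥0∞)).toReal = rieszC Λ T := by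
    change (((rieszCont hadd hpos).toFun ⟨T, hTc.isCompact⟩ : ℝ≥0∞)).toReal = rieszC Λ T
    simp [rieszCont, Real.coe_toNNReal _ (rieszC_nonneg hpos T)]
  rw [h4] at h3
  linarith

end RieszRep

section RieszMain

variable {K : Type*} [TopologicalSpace K] [CompactSpace K] [T2Space K]
  [MeasurableSpace K] [BorelSpace K]

theorem riesz_rep {Λ : C(K, ℝ) → ℝ}
    (hadd : ∀ f g : C(K, ℝ), Λ (f + g) = Λ f + Λ g)
    (hpos : ∀ f : C(K, ℝ), (∀ x, 0 ≤ f x) → 0 ≤ Λ f)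
    (hsmul : ∀ (c : ℝ) (f : C(K, ℝ)), Λ (c • f) = c * Λ f)
    (hone : Λ (1 : C(K, ℝ)) = 1) :
    ∃ ν : Measure K, IsProbabilityMeasure ν ∧ ∀ f : C(K, ℝ), Λ f = ∫ x, f x ∂ν := by
  set ν := (rieszCont hadd hpos).measure with hν
  have hprob : IsProbabilityMeasure ν := ⟨rieszMeasure_univ hadd hpos hone⟩
  have hint : ∀ f : C(K, ℝ), Integrable (fun x => f x) ν := fun f =>
    integrableOn_univ.mp
      (f.continuous.continuousOn.integrableOn_compact' isCompact_univ MeasurableSet.univ)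
  have hzero : Λ (0 : C(K, ℝ)) = 0 := by
    have := hsmul 0 0
    simpa using this
  have hsum : ∀ (n : ℕ) (g : ℕ → C(K, ℝ)),
      Λ (∑ k ∈ Finset.range n, g k) = ∑ k ∈ Finset.range n, Λ (g k) := by
    intro n g
    induction n with
    | zero => simpa using hzero
    | succ n ih => rw [Finset.sum_range_succ, hadd, ih, Finset.sum_range_succ]
  have hmono := riesz_mono hadd hpos
  have key : ∀ f : C(K, ℝ), (∀ x, 0 ≤ f x) → Λ f ≤ ∫ x, f x ∂ν := by
    intro f hf
    have main : ∀ ε : ℝ, 0 < ε → Λ f ≤ ∫ x, f x ∂ν + 2 * ε := by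
      intro ε hε
      set n := ⌈‖f‖ / ε⌉₊ with hn
      have hur : ∀ k : ℕ, ∃ g : C(K, ℝ), EqOn g 0 {x : K | f x ≤ k * ε + ε / 2} ∧
          EqOn g 1 {x : K | (k + 1) * ε ≤ f x} ∧ ∀ x, g x ∈ Icc (0 : ℝ) 1 := by
        intro k
        refine exists_continuous_zero_one_of_isClosed
          (isClosed_le (map_continuous f) continuous_const)
          (isClosed_le continuous_const (map_continuous f)) ?_
        rw [Set.disjoint_left]
        intro x h1 h2
        simp only [mem_setOf_eq] at h1 h2
        nlinarith
      choose g hg0 hg1 hg01 using hur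
      -- pointwise upper bound for f
      have hpt : ∀ x, f x ≤ ε + ε * ∑ k ∈ Finset.range n, g k x := by
        intro x
        set m := ⌊f x / ε⌋₊ with hm
        have hd0 : 0 ≤ f x / ε := div_nonneg (hf x) hε.le
        have hmn : m ≤ n := by
          refine le_trans (Nat.floor_le_floor ?_) (Nat.floor_le_ceil _)
          exact div_le_div_of_nonneg_right
            ((le_abs_self _).trans (f.norm_coe_le_norm x)) hε.le
        have hone' : ∀ k < m, g k x = 1 := by
          intro k hk
          apply hg1 k
          show ((k : ℝ) + 1) * ε ≤ f x
          have h1 : ((k : ℝ) + 1) ≤ (m : ℝ) := by exact_mod_cast hk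
          have h2 : (m : ℝ) ≤ f x / ε := Nat.floor_le hd0
          calc ((k : ℝ) + 1) * ε ≤ (f x / ε) * ε :=
                mul_le_mul_of_nonneg_right (h1.trans h2) hε.le
            _ = f x := div_mul_cancel₀ _ hε.ne'
        have hsumge : (m : ℝ) ≤ ∑ k ∈ Finset.range n, g k x := by
          calc (m : ℝ) = ∑ k ∈ Finset.range m, (1 : ℝ) := by simp
            _ = ∑ k ∈ Finset.range m, g k x := by
                refine Finset.sum_congr rfl (fun k hk => ?_)
                exact (hone' k (Finset.mem_range.mp hk)).symm
            _ ≤ ∑ k ∈ Finset.range n, g k x :=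
                Finset.sum_le_sum_of_subset_of_nonneg (Finset.range_subset_range.2 hmn)
                  (fun k _ _ => (hg01 k x).1)
        have hlt : f x < ((m : ℝ) + 1) * ε := by
          have := Nat.lt_floor_add_one (f x / ε)
          calc f x = (f x / ε) * ε := (div_mul_cancel₀ _ hε.ne').symm
            _ < ((m : ℝ) + 1) * ε := by
                exact mul_lt_mul_of_pos_right this hε
        nlinarith [mul_le_mul_of_nonneg_left hsumge hε.le]
      -- step 2 : Λ f ≤ ε + ε * ∑ Λ (g k)
      have step2 : Λ f ≤ ε + ε * ∑ k ∈ Finset.range n, Λ (g k) := by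
        have h := hmono f (ε • (1 : C(K, ℝ)) + ε • ∑ k ∈ Finset.range n, g k) ?_
        · rwa [hadd, hsmul, hsmul, hone, hsum, mul_one] at h
        · intro x
          simpa [Finset.sum_apply] using hpt x
      -- step 3 : Λ (g k) ≤ ν {x | k ε < f x}
      have step3 : ∀ k : ℕ, Λ (g k) ≤ (ν {x : K | (k : ℝ) * ε < f x}).toReal := by
        intro k
        refine riesz_le_measure hadd hpos hone (fun x => (hg01 k x).1) (fun x => (hg01 k x).2)
          (T := {x : K | (k : ℝ) * ε + ε / 2 ≤ f x})
          (isClosed_le continuous_const (map_continuous f))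
          (isOpen_lt continuous_const (map_continuous f)) ?_ ?_
        · intro x hx
          simp only [mem_setOf_eq] at hx ⊢
          linarith
        · intro x hx
          apply hg0 k
          simp only [mem_setOf_eq] at hx ⊢
          linarith [not_le.mp hx]
      -- step 4 : ∑ ε * ν(U k) ≤ ∫ f + ε
      have step4 : ∑ k ∈ Finset.range n, ε * (ν {x : K | (k : ℝ) * ε < f x}).toReal
          ≤ (∫ x, f x ∂ν) + ε := by
        have hUmeas : ∀ k : ℕ, MeasurableSet {x : K | (k : ℝ) * ε < f x} := fun k =>
          (isOpen_lt continuous_const (map_continuous f)).measurableSet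
        have hind : ∀ k : ℕ,
            Integrable ({x : K | (k : ℝ) * ε < f x}.indicator (fun _ => ε)) ν := fun k =>
          (integrable_const ε).indicator (hUmeas k)
        have heq : ∀ k : ℕ, ∫ x, {x : K | (k : ℝ) * ε < f x}.indicator (fun _ => ε) x ∂ν
            = ε * (ν {x : K | (k : ℝ) * ε < f x}).toReal := by
          intro k
          rw [MeasureTheory.integral_indicator_const _ (hUmeas k), smul_eq_mul, mul_comm, measureReal_def]
        have hptsum : ∀ x, ∑ k ∈ Finset.range n,
            {x : K | (k : ℝ) * ε < f x}.indicator (fun _ => ε) x ≤ f x + ε := by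
          intro x
          set m := ⌊f x / ε⌋₊ with hm
          have hd0 : 0 ≤ f x / ε := div_nonneg (hf x) hε.le
          have hbd : ∀ k ∈ Finset.range n,
              {x : K | (k : ℝ) * ε < f x}.indicator (fun _ => ε) x
                ≤ if k ∈ Finset.range (m + 1) then ε else 0 := by
            intro k _
            by_cases hk : k ∈ Finset.range (m + 1)
            · simp only [hk, if_true, Set.indicator_apply]
              split <;> simp [hε.le]
            · simp only [hk, if_false]
              have hkm : m + 1 ≤ k := by
                have := Finset.mem_range.not.mp hk; omega
              have hxU : x ∉ {x : K | (k : ℝ) * ε < f x} := by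
                simp only [mem_setOf_eq, not_lt]
                have h1 : f x / ε < (m : ℝ) + 1 := Nat.lt_floor_add_one _
                have h2 : ((m : ℝ) + 1) ≤ (k : ℝ) := by exact_mod_cast hkm
                calc f x = (f x / ε) * ε := (div_mul_cancel₀ _ hε.ne').symm
                  _ ≤ (k : ℝ) * ε := mul_le_mul_of_nonneg_right (h1.le.trans h2) hε.le
              rw [Set.indicator_of_notMem hxU]
          calc ∑ k ∈ Finset.range n, {x : K | (k : ℝ) * ε < f x}.indicator (fun _ => ε) x
              ≤ ∑ k ∈ Finset.range n, (if k ∈ Finset.range (m + 1) then ε else 0) :=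
                Finset.sum_le_sum hbd
            _ = ∑ k ∈ Finset.range n ∩ Finset.range (m + 1), ε := by
                rw [Finset.sum_ite_mem]
            _ ≤ ((m : ℝ) + 1) * ε := by
                rw [Finset.sum_const, nsmul_eq_mul]
                have hcard : (Finset.range n ∩ Finset.range (m + 1)).card ≤ m + 1 := by
                  exact le_trans (Finset.card_le_card Finset.inter_subset_right)
                    (by simp)
                have : ((Finset.range n ∩ Finset.range (m + 1)).card : ℝ) ≤ (m : ℝ) + 1 := by
                  exact_mod_cast hcard
                exact mul_le_mul_of_nonneg_right this hε.le
            _ ≤ f x + ε := by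
                have h2 : (m : ℝ) ≤ f x / ε := Nat.floor_le hd0
                have : (m : ℝ) * ε ≤ f x := by
                  calc (m : ℝ) * ε ≤ (f x / ε) * ε := mul_le_mul_of_nonneg_right h2 hε.le
                    _ = f x := div_mul_cancel₀ _ hε.ne'
                nlinarith
        calc ∑ k ∈ Finset.range n, ε * (ν {x : K | (k : ℝ) * ε < f x}).toReal
            = ∫ x, ∑ k ∈ Finset.range n,
                {x : K | (k : ℝ) * ε < f x}.indicator (fun _ => ε) x ∂ν := by
              rw [MeasureTheory.integral_finset_sum _ (fun k _ => hind k)]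
              exact Finset.sum_congr rfl (fun k _ => (heq k).symm)
          _ ≤ ∫ x, (f x + ε) ∂ν := by
              refine integral_mono (integrable_finset_sum _ (fun k _ => hind k))
                ((hint f).add (integrable_const ε)) hptsum
          _ = (∫ x, f x ∂ν) + ε := by
              rw [integral_add (hint f) (integrable_const ε), integral_const]
              simp [measure_univ]
      have hmul : ε * ∑ k ∈ Finset.range n, Λ (g k)
          ≤ ∑ k ∈ Finset.range n, ε * (ν {x : K | (k : ℝ) * ε < f x}).toReal := by
        rw [Finset.mul_sum]
        exact Finset.sum_le_sum (fun k _ => mul_le_mul_of_nonneg_left (step3 k) hε.le)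
      linarith
    refine le_of_forall_pos_le_add (fun ε hε => ?_)
    have := main (ε / 2) (half_pos hε)
    linarith
  -- general case
  refine ⟨ν, hprob, fun f => ?_⟩
  have hsub : ∀ a b : C(K, ℝ), Λ (a - b) = Λ a - Λ b := by
    intro a b
    have h1 := hadd (a - b) b
    rw [sub_add_cancel] at h1
    linarith
  have hb : ∀ x, |f x| ≤ ‖f‖ := fun x => (f.norm_coe_le_norm x).trans_eq rfl
  have h1 : Λ (f + ‖f‖ • (1 : C(K, ℝ))) ≤ ∫ x, (f + ‖f‖ • (1 : C(K, ℝ))) x ∂ν := by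
    refine key _ (fun x => ?_)
    simp only [ContinuousMap.add_apply, ContinuousMap.smul_apply, ContinuousMap.one_apply,
      smul_eq_mul, mul_one]
    linarith [neg_abs_le (f x), hb x]
  have h2 : Λ (‖f‖ • (1 : C(K, ℝ)) - f) ≤ ∫ x, (‖f‖ • (1 : C(K, ℝ)) - f) x ∂ν := by
    refine key _ (fun x => ?_)
    simp only [ContinuousMap.sub_apply, ContinuousMap.smul_apply, ContinuousMap.one_apply,
      smul_eq_mul, mul_one]
    linarith [le_abs_self (f x), hb x]
  have e1 : Λ (f + ‖f‖ • (1 : C(K, ℝ))) = Λ f + ‖f‖ := by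
    rw [hadd, hsmul, hone, mul_one]
  have e2 : Λ (‖f‖ • (1 : C(K, ℝ)) - f) = ‖f‖ - Λ f := by
    rw [hsub, hsmul, hone, mul_one]
  have i1 : ∫ x, (f + ‖f‖ • (1 : C(K, ℝ))) x ∂ν = (∫ x, f x ∂ν) + ‖f‖ := by
    have : (fun x => (f + ‖f‖ • (1 : C(K, ℝ))) x) = fun x => f x + ‖f‖ := by
      funext x
      simp [smul_eq_mul]
    rw [this, integral_add (hint f) (integrable_const _), integral_const]
    simp [measure_univ]
  have i2 : ∫ x, (‖f‖ • (1 : C(K, ℝ)) - f) x ∂ν = ‖f‖ - ∫ x, f x ∂ν := by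
    have : (fun x => (‖f‖ • (1 : C(K, ℝ)) - f) x) = fun x => ‖f‖ - f x := by
      funext x
      simp [smul_eq_mul]
    rw [this, integral_sub (integrable_const _) (hint f), integral_const]
    simp [measure_univ]
  rw [e1, i1] at h1
  rw [e2, i2] at h2
  linarith

end RieszMain


/-- Restriction of a measure to a null closed subset via nicely-shrinking
thickenings: given a Borel probability measure `μ` on a compact Hausdorff
space `X`, a closed set `C`, a net of open thickenings `{C i}` of positive
measure shrinking nicely to `C`, and a generalized limit `L` on bounded nets,
the assignment `f ↦ L (i ↦ μ(C i)⁻¹ ∫_{C i} f̃ dμ)` (for any continuous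
extension `f̃` of `f`) is well defined and given by integration against a
Borel probability measure on `C` (Riesz–Markov). -/
theorem restricted_measure_exists
    {X : Type*} [TopologicalSpace X] [CompactSpace X] [T2Space X]
    [MeasurableSpace X] [BorelSpace X]
    (μ : Measure X) [IsProbabilityMeasure μ]
    {I : Type*} [Preorder I] [IsDirected I (· ≤ ·)] [Nonempty I]
    (C : Set X) (hC : IsClosed C)
    (Cnet : I → Set X) (hopen : ∀ i, IsOpen (Cnet i)) (hsub : ∀ i, C ⊆ Cnet i)
    (hshrink : ∀ U : Set X, IsOpen U → C ⊆ U → ∃ i, ∀ j, i ≤ j → Cnet j ⊆ U)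
    (hpos : ∀ i, 0 < μ (Cnet i))
    (L : (I → ℝ) → ℝ)
    (hadd : ∀ f g : I → ℝ, (∃ M, ∀ i, |f i| ≤ M) → (∃ M, ∀ i, |g i| ≤ M) →
      L (f + g) = L f + L g)
    (hsmul : ∀ (c : ℝ) (f : I → ℝ), (∃ M, ∀ i, |f i| ≤ M) → L (c • f) = c * L f)
    (hposL : ∀ f : I → ℝ, (∃ M, ∀ i, |f i| ≤ M) → (∀ i, 0 ≤ f i) → 0 ≤ L f)
    (hlim : ∀ (f : I → ℝ) (a : ℝ), (∃ M, ∀ i, |f i| ≤ M) →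
      Filter.Tendsto f Filter.atTop (nhds a) → L f = a) :
    ∃ ν : Measure C, IsProbabilityMeasure ν ∧
      ∀ (f : C(C, ℝ)) (ftilde : C(X, ℝ)),
        (∀ x : C, ftilde (x : X) = f x) →
        L (fun i => (μ (Cnet i)).toReal⁻¹ * ∫ x in Cnet i, ftilde x ∂μ)
          = ∫ x, f x ∂ν := by
  haveI : CompactSpace ↥C := isCompact_iff_compactSpace.mp hC.isCompact
  have hintX : ∀ g : C(X, ℝ), Integrable (fun x => g x) μ := fun g =>
    integrableOn_univ.mp
      (g.continuous.continuousOn.integrableOn_compact' isCompact_univ MeasurableSet.univ)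
  set A : C(X, ℝ) → I → ℝ :=
    fun g i => (μ (Cnet i)).toReal⁻¹ * ∫ x in Cnet i, g x ∂μ with hA
  have hμpos : ∀ i, 0 < (μ (Cnet i)).toReal := fun i =>
    ENNReal.toReal_pos (hpos i).ne' (measure_ne_top μ _)
  have hAbd : ∀ g : C(X, ℝ), ∀ i, |A g i| ≤ ‖g‖ := by
    intro g i
    have h1 : ‖∫ x in Cnet i, g x ∂μ‖ ≤ ‖g‖ * (μ (Cnet i)).toReal :=
      norm_setIntegral_le_of_norm_le_const (measure_lt_top μ _)
        (fun x _ => g.norm_coe_le_norm x)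
    rw [Real.norm_eq_abs] at h1
    have h2 : |A g i| = (μ (Cnet i)).toReal⁻¹ * |∫ x in Cnet i, g x ∂μ| := by
      rw [hA, abs_mul, abs_of_nonneg (inv_nonneg.mpr (hμpos i).le)]
    rw [h2]
    calc (μ (Cnet i)).toReal⁻¹ * |∫ x in Cnet i, g x ∂μ|
        ≤ (μ (Cnet i)).toReal⁻¹ * (‖g‖ * (μ (Cnet i)).toReal) :=
          mul_le_mul_of_nonneg_left h1 (inv_nonneg.mpr (hμpos i).le)
      _ = ‖g‖ := by
          rw [mul_comm ‖g‖, ← mul_assoc, inv_mul_cancel₀ (hμpos i).ne', one_mul]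
  have hAadd : ∀ g h : C(X, ℝ), A (g + h) = A g + A h := by
    intro g h
    funext i
    simp only [hA, Pi.add_apply]
    rw [show (fun x => (g + h) x) = fun x => g x + h x from rfl,
      integral_add (hintX g).integrableOn (hintX h).integrableOn]
    ring
  have hAnull : ∀ g : C(X, ℝ), (∀ x ∈ C, g x = 0) →
      Filter.Tendsto (A g) Filter.atTop (nhds 0) := by
    intro g hg
    rw [NormedAddCommGroup.tendsto_nhds_zero]
    intro ε hε
    set U := {x : X | |g x| < ε / 2} with hU
    have hUopen : IsOpen U := isOpen_lt (continuous_abs.comp g.continuous) continuous_const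
    have hCU : C ⊆ U := fun x hx => by simp [hU, hg x hx, half_pos hε]
    obtain ⟨i0, hi0⟩ := hshrink U hUopen hCU
    rw [Filter.atTop_basis.eventually_iff]
    refine ⟨i0, trivial, fun j hj => ?_⟩
    have h1 : ‖∫ x in Cnet j, g x ∂μ‖ ≤ (ε / 2) * (μ (Cnet j)).toReal := by
      refine norm_setIntegral_le_of_norm_le_const (measure_lt_top μ _)
        (fun x hx => ?_)
      exact le_of_lt (hi0 j hj hx)
    rw [Real.norm_eq_abs] at h1
    have h2 : ‖A g j‖ = (μ (Cnet j)).toReal⁻¹ * |∫ x in Cnet j, g x ∂μ| := by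
      rw [Real.norm_eq_abs, hA, abs_mul, abs_of_nonneg (inv_nonneg.mpr (hμpos j).le)]
    rw [h2]
    calc (μ (Cnet j)).toReal⁻¹ * |∫ x in Cnet j, g x ∂μ|
        ≤ (μ (Cnet j)).toReal⁻¹ * ((ε / 2) * (μ (Cnet j)).toReal) :=
          mul_le_mul_of_nonneg_left h1 (inv_nonneg.mpr (hμpos j).le)
      _ = ε / 2 := by
          rw [mul_comm (ε / 2), ← mul_assoc, inv_mul_cancel₀ (hμpos j).ne', one_mul]
      _ < ε := half_lt_self hε
  have hAwd : ∀ g h : C(X, ℝ), (∀ x ∈ C, g x = h x) → L (A g) = L (A h) := by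
    intro g h hgh
    have hd : ∀ x ∈ C, (g - h) x = 0 := fun x hx => by
      simp [ContinuousMap.sub_apply, hgh x hx]
    have h0 : L (A (g - h)) = 0 := hlim _ 0 ⟨‖g - h‖, hAbd _⟩ (hAnull _ hd)
    have hgdecomp : A g = A h + A (g - h) := by
      rw [← hAadd]
      congr 1
      ring
    rw [hgdecomp, hadd _ _ ⟨‖h‖, hAbd _⟩ ⟨‖g - h‖, hAbd _⟩, h0, add_zero]
  -- choose continuous extensions
  have hext : ∀ f : C(↥C, ℝ), ∃ g : C(X, ℝ), ∀ x : ↥C, g x = f x := fun f => by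
    obtain ⟨g, hg⟩ := ContinuousMap.exists_restrict_eq hC f
    exact ⟨g, fun x => DFunLike.congr_fun hg x⟩
  choose E hE using hext
  set Λ : C(↥C, ℝ) → ℝ := fun f => L (A (E f)) with hΛ
  have hext' : ∀ (f : C(↥C, ℝ)) (g : C(X, ℝ)), (∀ x : ↥C, g x = f x) → L (A g) = Λ f := by
    intro f g hg
    exact hAwd g (E f) (fun x hx => by rw [hg ⟨x, hx⟩, hE f ⟨x, hx⟩])
  have Ladd : ∀ f g : C(↥C, ℝ), Λ (f + g) = Λ f + Λ g := by
    intro f g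
    have h1 : L (A (E f + E g)) = Λ (f + g) := by
      refine hext' _ _ (fun x => ?_)
      simp [ContinuousMap.add_apply, hE f x, hE g x]
    rw [← h1, hAadd, hadd _ _ ⟨‖E f‖, hAbd _⟩ ⟨‖E g‖, hAbd _⟩]
  have Lsmul : ∀ (c : ℝ) (f : C(↥C, ℝ)), Λ (c • f) = c * Λ f := by
    intro c f
    have h1 : L (A (c • E f)) = Λ (c • f) := by
      refine hext' _ _ (fun x => ?_)
      simp [ContinuousMap.smul_apply, hE f x]
    have h2 : A (c • E f) = c • A (E f) := by
      funext i
      simp only [hA, Pi.smul_apply, smul_eq_mul]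
      rw [show (fun x => (c • E f) x) = fun x => c • (E f) x from rfl, integral_smul]
      simp [smul_eq_mul]; ring
    rw [← h1, h2, hsmul c _ ⟨‖E f‖, hAbd _⟩]
  have Lpos : ∀ f : C(↥C, ℝ), (∀ x, 0 ≤ f x) → 0 ≤ Λ f := by
    intro f hf
    set g : C(X, ℝ) := E f ⊔ 0 with hg
    have hgf : ∀ x : ↥C, g x = f x := by
      intro x
      simp only [hg, ContinuousMap.sup_apply, ContinuousMap.zero_apply, hE f x]
      exact max_eq_left (hf x)
    have h1 : L (A g) = Λ f := hext' f g hgf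
    rw [← h1]
    refine hposL _ ⟨‖g‖, hAbd _⟩ (fun i => ?_)
    refine mul_nonneg (inv_nonneg.mpr (hμpos i).le) ?_
    refine setIntegral_nonneg (hopen i).measurableSet (fun x _ => ?_)
    simp only [hg, ContinuousMap.sup_apply, ContinuousMap.zero_apply]
    exact le_max_right _ _
  have Lone : Λ (1 : C(↥C, ℝ)) = 1 := by
    have h1 : L (A (1 : C(X, ℝ))) = Λ 1 := hext' _ _ (fun x => rfl)
    rw [← h1]
    have h2 : A (1 : C(X, ℝ)) = fun _ => 1 := by
      funext i
      simp only [hA]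
      rw [show (fun x => (1 : C(X, ℝ)) x) = fun _ => (1 : ℝ) from rfl]
      rw [setIntegral_const]
      simp [inv_mul_cancel₀ (hμpos i).ne']
      rw [measureReal_def, inv_mul_cancel₀ (hμpos i).ne']
    rw [h2]
    exact hlim _ 1 ⟨1, fun i => by simp⟩ tendsto_const_nhds
  obtain ⟨ν, hν, hrep⟩ := riesz_rep Ladd Lpos Lsmul Lone
  refine ⟨ν, hν, fun f ftilde hft => ?_⟩
  have h1 : L (A ftilde) = Λ f := hext' f ftilde hft
  have h2 : (fun i => (μ (Cnet i)).toReal⁻¹ * ∫ x in Cnet i, ftilde x ∂μ) = A ftilde := rfl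
  rw [h2, h1, hrep f]
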